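/- arXiv:2401.06547 — 6 statements merged into one kernel-verified Lean document; each statement's English description precedes it below -/
import Mathlib

section
/- Let n be a positive integer and s : List (Fin n) a stream with s.length < n. Define f : Fin n → ℤ by f(i) = (number of occurrences of i in s) − 1. Then: (a) ∑_{i} f(i) = s.length − n; (b) for every i : Fin n, f(i) < 0 if and only if i is missing from s; and (c) 2 · ∑_{i : f(i) < 0} |f(i)| ≥ ∑_{i} |f(i)|. -/
/-! Since `∑ f = |s| - n < 0`, the positive part of `f` weighs no more than its negative part,
so the negative part carries at least half of `∑ |f|`. -/

open Finset

theorem List.sum_count_eq_length {α : Type*} [Fintype α] [DecidableEq α] (s : List α) :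
    ∑ a, s.count a = s.length := by
  simpa using Multiset.sum_count_eq_card (s := univ) (m := (s : Multiset α)) (by simp)

theorem sum_abs_le_two_mul_sum_abs_filter_neg {ι R : Type*} [CommRing R] [LinearOrder R]
    [IsStrictOrderedRing R] (s : Finset ι) (f : ι → R) (hf : ∑ i ∈ s, f i ≤ 0) :
    ∑ i ∈ s, |f i| ≤ 2 * ∑ i ∈ s with f i < 0, |f i| := by
  have hneg : ∑ i ∈ s with f i < 0, |f i| = -∑ i ∈ s with f i < 0, f i := by
    rw [← sum_neg_distrib]
    exact sum_congr rfl fun i hi => abs_of_neg (mem_filter.mp hi).2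
  have hnonneg : ∑ i ∈ s with ¬f i < 0, |f i| = ∑ i ∈ s with ¬f i < 0, f i :=
    sum_congr rfl fun i hi => abs_of_nonneg (not_lt.mp (mem_filter.mp hi).2)
  rw [← sum_filter_add_sum_filter_not s (fun i => f i < 0)] at hf ⊢
  linarith

theorem stmt_1_general (n : ℕ) (s : List (Fin n)) (hlen : s.length < n)
    (f : Fin n → ℤ) (hf : ∀ i, f i = (s.count i : ℤ) - 1) :
    (∑ i, f i = (s.length : ℤ) - (n : ℤ)) ∧
    (∀ i, f i < 0 ↔ i ∉ s) ∧
    2 * ∑ i ∈ Finset.univ.filter (fun i => f i < 0), |f i| ≥ ∑ i, |f i| := by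
  have hsum : ∑ i, f i = (s.length : ℤ) - n := by
    simp only [hf, sum_sub_distrib, ← Nat.cast_sum, List.sum_count_eq_length]
    simp
  refine ⟨hsum, fun i => ?_, sum_abs_le_two_mul_sum_abs_filter_neg _ f (by omega)⟩
  rw [hf, ← List.count_eq_zero]
  omega

/-- For a stream `s` over `Fin n` of length `< n`, with frequency vector
`f i = count of i in s − 1`: the total sum of `f` is `s.length − n`, the
negative coordinates are exactly the missing items, and the absolute mass on
negative coordinates is at least half the total absolute mass. -/
theorem stmt_1 (n : ℕ) (hn : 0 < n) (s : List (Fin n)) (hlen : s.length < n)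
    (f : Fin n → ℤ) (hf : ∀ i, f i = (s.count i : ℤ) - 1) :
    (∑ i, f i = (s.length : ℤ) - (n : ℤ)) ∧
    (∀ i, f i < 0 ↔ i ∉ s) ∧
    2 * ∑ i ∈ Finset.univ.filter (fun i => f i < 0), |f i| ≥ ∑ i, |f i| :=
  stmt_1_general n s hlen f hf
end

section
/- Let n be a positive integer, k a natural number, and s : List (Fin n) a stream with s.length = n + k. Define f : Fin n → ℤ by f(i) = (number of occurrences of i in s) − 1, and suppose some item of Fin n is missing from s. Then (k + 2) · (number of items of Fin n missing from s) ≥ ∑_{i} |f(i)|. -/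
/-- For a stream `s` over `Fin n` of length `n + k`, with frequency vector
`f i = count of i in s − 1`, if some item is missing from `s`, then
`(k+2)` times the number of missing items is at least the total absolute
mass of `f`. -/
theorem stmt_3 (n : ℕ) (hn : 0 < n) (k : ℕ) (s : List (Fin n))
    (hlen : s.length = n + k)
    (f : Fin n → ℤ) (hf : ∀ i, f i = (s.count i : ℤ) - 1)
    (hmiss : ∃ i : Fin n, i ∉ s) :
    ((k : ℤ) + 2) * ((Finset.univ.filter (fun i : Fin n => i ∉ s)).card : ℤ)
      ≥ ∑ i, |f i| := by
  classical
  set M := Finset.univ.filter (fun i : Fin n => i ∉ s) with hM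
  have hm1 : 1 ≤ M.card := by
    obtain ⟨i, hi⟩ := hmiss
    exact Finset.card_pos.mpr ⟨i, by simp [hM, hi]⟩
  have key : ∀ i : Fin n, |f i| =
      (s.count i : ℤ) - 1 + 2 * (if i ∉ s then 1 else 0) := by
    intro i
    rw [hf i]
    by_cases h : i ∈ s
    · have h1 : (1 : ℤ) ≤ s.count i := by
        exact_mod_cast List.count_pos_iff.mpr h
      rw [abs_of_nonneg (by linarith)]
      simp [h]
    · simp [h, List.count_eq_zero_of_not_mem h]
  have hcount : ∑ i : Fin n, (s.count i : ℤ) = (n : ℤ) + k := by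
    have : ∑ i : Fin n, s.count i = s.length := by
      simpa using Multiset.sum_count_eq_card (s := Finset.univ) (m := (s : Multiset (Fin n))) (fun a _ => Finset.mem_univ a)
    rw [← Nat.cast_sum, this, hlen]
    push_cast
    ring
  have hboole : ∑ i : Fin n, (if i ∉ s then (1 : ℤ) else 0) = M.card := by
    rw [hM, Finset.sum_boole]
  calc ∑ i, |f i| = ∑ i : Fin n, ((s.count i : ℤ) - 1 + 2 * (if i ∉ s then 1 else 0)) := by
        exact Finset.sum_congr rfl fun i _ => key i
    _ = (k : ℤ) + 2 * M.card := by
        rw [Finset.sum_add_distrib, Finset.sum_sub_distrib, hcount, ← Finset.mul_sum, hboole]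
        simp [Finset.card_univ]
    _ ≤ ((k : ℤ) + 2) * M.card := by
        have hk : (0:ℤ) ≤ k := Int.natCast_nonneg k
        have hm : (1:ℤ) ≤ M.card := by exact_mod_cast hm1
        nlinarith
end

section
/- Let n be a positive integer, s : List (Fin n) a stream with s.length ≤ n, and p a real number with 0 ≤ p ≤ 1. Define f : Fin n → ℤ by f(i) = (number of occurrences of i in s) − 1, let A be the finite set of items i that are missing from s, and let B be the finite set of items i that occur at least twice in s. Then ∑_{i ∈ A} |f(i)|^p = |A|, |A| ≥ ∑_{i ∈ B} f(i), and ∑_{i ∈ B} f(i) ≥ ∑_{i ∈ B} (f(i))^p, where the powers are real powers of the real casts of the integer values. -/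
open Real

/-- For a stream `s` over `Fin n` of length `≤ n`, frequency vector
`f i = count of i in s − 1`, `A` the set of missing items, `B` the set of
items occurring at least twice, and `0 ≤ p ≤ 1`:
`∑_{i∈A} |f i|^p = |A|`, `|A| ≥ ∑_{i∈B} f i`, and
`∑_{i∈B} f i ≥ ∑_{i∈B} (f i)^p` (real powers). -/
theorem stmt_4 (n : ℕ) (hn : 0 < n) (s : List (Fin n)) (hlen : s.length ≤ n)
    (p : ℝ) (hp0 : 0 ≤ p) (hp1 : p ≤ 1)
    (f : Fin n → ℤ) (hf : ∀ i, f i = (s.count i : ℤ) - 1)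
    (A B : Finset (Fin n))
    (hA : A = Finset.univ.filter (fun i : Fin n => i ∉ s))
    (hB : B = Finset.univ.filter (fun i : Fin n => 2 ≤ s.count i)) :
    (∑ i ∈ A, ((|f i| : ℝ) ^ p) = (A.card : ℝ)) ∧
    ((A.card : ℝ) ≥ ∑ i ∈ B, (f i : ℝ)) ∧
    (∑ i ∈ B, (f i : ℝ) ≥ ∑ i ∈ B, ((f i : ℝ) ^ p)) := by
  have hfA : ∀ i ∈ A, f i = -1 := by
    intro i hi
    rw [hA, Finset.mem_filter] at hi
    rw [hf i, List.count_eq_zero_of_not_mem hi.2]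
    ring
  have hcount : (∑ i : Fin n, (s.count i : ℤ)) = (s.length : ℤ) := by
    have : (∑ i : Fin n, s.count i) = s.length := by
      have := Multiset.sum_count_eq_card (s := (Finset.univ : Finset (Fin n)))
        (m := (s : Multiset (Fin n))) (fun a _ => Finset.mem_univ a)
      simpa using this
    exact_mod_cast this
  have hsum : (∑ i : Fin n, f i) = (s.length : ℤ) - n := by
    simp [hf, Finset.sum_sub_distrib, hcount]
  have hcompl : (∑ i ∈ Bᶜ, f i) = -(A.card : ℤ) := by
    have hAB : A ⊆ Bᶜ := by
      intro i hi
      rw [hA, Finset.mem_filter] at hi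
      rw [Finset.mem_compl, hB, Finset.mem_filter]
      simp only [Finset.mem_univ, true_and]
      intro h2
      exact hi.2 (List.count_pos_iff.mp (by omega))
    rw [← Finset.sum_subset hAB (by
      intro i hi hiA
      rw [Finset.mem_compl, hB, Finset.mem_filter] at hi
      simp only [Finset.mem_univ, true_and] at hi
      rw [hA, Finset.mem_filter] at hiA
      simp only [Finset.mem_univ, true_and] at hiA
      have h1 : s.count i ≤ 1 := by omega
      have h2 : 1 ≤ s.count i := List.one_le_count_iff.mpr (not_not.mp hiA)
      rw [hf i]
      omega)]
    rw [Finset.sum_congr rfl hfA]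
    simp
  have hBsum : (∑ i ∈ B, f i) = (s.length : ℤ) - n + A.card := by
    have := Finset.sum_add_sum_compl B f
    omega
  refine ⟨?_, ?_, ?_⟩
  · rw [Finset.sum_congr rfl (fun i hi => show (|f i| : ℝ) ^ p = 1 by
      rw [hfA i hi]; norm_num)]
    simp
  · have : (∑ i ∈ B, f i) ≤ (A.card : ℤ) := by
      rw [hBsum]; omega
    calc (∑ i ∈ B, (f i : ℝ)) = ((∑ i ∈ B, f i : ℤ) : ℝ) := by push_cast; ring
      _ ≤ (A.card : ℝ) := by exact_mod_cast this
  · apply Finset.sum_le_sum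
    intro i hi
    have h1 : (1 : ℝ) ≤ (f i : ℝ) := by
      rw [hB, Finset.mem_filter] at hi
      have h2 : (1 : ℤ) ≤ f i := by rw [hf i]; have := hi.2; omega
      exact_mod_cast h2
    calc ((f i : ℝ)) ^ p ≤ (f i : ℝ) ^ (1 : ℝ) :=
          Real.rpow_le_rpow_of_exponent_le h1 hp1
      _ = (f i : ℝ) := Real.rpow_one _
end

section
/- Let α and β be types, let F : List α → Finset β satisfy F(σ ++ τ) ⊆ F(σ) for all lists σ, τ, and let m, k be natural numbers with m ≥ 1. Suppose that for every list σ with σ.length ≤ m·k one has (F [] ).card < 2^m · (F σ).card. Then there exists a list σ* with σ*.length ≤ (m − 1)·k such that for every list a with a.length = k, (F σ*).card ≤ 2 · (F (σ* ++ a)).card. -/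
/-- Halving-termination lemma: if `F` is antitone under extension and
`(F []).card < 2^m * (F σ).card` for every `σ` of length at most `m·k`,
then there is a partial stream `σ*` of length at most `(m-1)·k` after which
no block of `k` further items can cut `F` by more than half. -/
theorem stmt_6 {α β : Type*} (F : List α → Finset β)
    (hmono : ∀ σ τ : List α, F (σ ++ τ) ⊆ F σ)
    (m k : ℕ) (hm : 1 ≤ m)
    (h : ∀ σ : List α, σ.length ≤ m * k → (F []).card < 2 ^ m * (F σ).card) :
    ∃ σstar : List α, σstar.length ≤ (m - 1) * k ∧
      ∀ a : List α, a.length = k →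
        (F σstar).card ≤ 2 * (F (σstar ++ a)).card := by
  by_contra hc
  push_neg at hc
  have key : ∀ i ≤ m, ∃ σ : List α, σ.length = i * k ∧
      2 ^ i * (F σ).card ≤ (F []).card := by
    intro i hi
    induction i with
    | zero => exact ⟨[], by simp, by simp⟩
    | succ n ih =>
      obtain ⟨σ, hlen, hcard⟩ := ih (Nat.le_of_succ_le hi)
      have hσlen : σ.length ≤ (m - 1) * k := by
        rw [hlen]
        exact Nat.mul_le_mul_right k (by omega)
      obtain ⟨a, ha, hlt⟩ := hc σ hσlen
      refine ⟨σ ++ a, by simp [hlen, ha]; ring, ?_⟩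
      calc 2 ^ (n + 1) * (F (σ ++ a)).card
          = 2 ^ n * (2 * (F (σ ++ a)).card) := by ring
        _ ≤ 2 ^ n * (F σ).card := Nat.mul_le_mul_left _ (Nat.le_of_lt hlt)
        _ ≤ (F []).card := hcard
  obtain ⟨σ, hlen, hcard⟩ := key m le_rfl
  have := h σ (by omega)
  omega
end

section
/- Let α and β be types, R a finite type with Fintype.card R ≤ 2^s for a natural number s, p a probability mass function on R, and A : List α → R → List β a function satisfying: (i) for all σ and r, (A σ r).length = σ.length, and (ii) for all σ, τ, r, the list A σ r is a prefix of A (σ ++ τ) r. Fix any natural number k ≥ 1. Then for every r ∈ R with p(r) > 2^{−(s+2)} there exists a list σ* with σ*.length ≤ (2s + 3)·k such that for every list a : List α with a.length = k there exists a list b : List β with b.length = k and 3 · p({r' : A (σ* ++ a) r' = (A σ* r) ++ b}) ≥ 2 · p({r' : A σ* r' = A σ* r}). -/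
open scoped ENNReal

/-!
Fix the seed `r` and let `m σ` be the probability that a seed produces the same outputs as `r`
on `σ`, so `m [] = 1` and `m σ ≥ p r`. If the claim failed for every short `σ`, each failure would
give a block `a` with `3 m (σ ++ a) < 2 m σ` (the candidate `b` being the output block of `r`
itself). Iterating from `[]` for `2s + 4` blocks would give
`p r ≤ (2/3)^(2s+4) = (4/9)^(s+2) ≤ 2^(-(s+2))`.
-/

theorem ENNReal.two_pow_lt_three_pow_mul (n : ℕ) {x : ℝ≥0∞} (hx : 2 ^ (-(n : ℤ)) < x) :
    2 ^ (2 * n) < 3 ^ (2 * n) * x := by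
  rw [ENNReal.zpow_neg, zpow_natCast] at hx
  have h8le9 : (2 : ℝ≥0∞) ^ (2 * n) * 2 ^ n ≤ 3 ^ (2 * n) := by
    rw [← pow_add, show 2 * n + n = 3 * n by ring, pow_mul, pow_mul]
    exact pow_le_pow_left₀ (by positivity) (by norm_num) n
  calc (2 : ℝ≥0∞) ^ (2 * n) = 2 ^ (2 * n) * 2 ^ n * (2 ^ n)⁻¹ := by
        rw [mul_assoc, ENNReal.mul_inv_cancel (by positivity) (by simp), mul_one]
    _ ≤ 3 ^ (2 * n) * (2 ^ n)⁻¹ := by gcongr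
    _ < 3 ^ (2 * n) * x := ENNReal.mul_lt_mul_right (by positivity) (by simp) hx

theorem exists_length_eq_pow_mul_le {α : Type*} {f : List α → ℝ≥0∞} {c d : ℝ≥0∞} {k m : ℕ}
    (h : ∀ σ : List α, σ.length ≤ m * k → ∃ a : List α, a.length = k ∧ c * f (σ ++ a) ≤ d * f σ) :
    ∀ t ≤ m + 1, ∃ σ : List α, σ.length = t * k ∧ c ^ t * f σ ≤ d ^ t * f [] := by
  intro t ht
  induction t with
  | zero => exact ⟨[], by simp, by simp⟩
  | succ t ih =>
    obtain ⟨σ, hσ, hfσ⟩ := ih (by omega)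
    obtain ⟨a, ha, hfa⟩ := h σ (by rw [hσ]; gcongr; omega)
    refine ⟨σ ++ a, by simp [hσ, ha, add_mul], ?_⟩
    calc c ^ (t + 1) * f (σ ++ a) = c ^ t * (c * f (σ ++ a)) := by ring
      _ ≤ c ^ t * (d * f σ) := by gcongr
      _ = d * (c ^ t * f σ) := by ring
      _ ≤ d * (d ^ t * f []) := by gcongr
      _ = d ^ (t + 1) * f [] := by ring

theorem PMF.apply_le_toOuterMeasure_of_mem {R : Type*} (p : PMF R) {s : Set R} {a : R}
    (ha : a ∈ s) : p a ≤ p.toOuterMeasure s :=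
  p.toOuterMeasure_apply_singleton a ▸ p.toOuterMeasure.mono (Set.singleton_subset_iff.2 ha)

section OnlineAlgorithm

variable {α β R : Type*} {A : List α → R → List β}

theorem output_nil_eq (hlen : ∀ (σ : List α) (r : R), (A σ r).length = σ.length) (r r' : R) :
    A [] r' = A [] r := by
  rw [List.eq_nil_of_length_eq_zero (hlen [] r'), List.eq_nil_of_length_eq_zero (hlen [] r)]

theorem exists_output_append (hlen : ∀ (σ : List α) (r : R), (A σ r).length = σ.length)
    (hprefix : ∀ (σ τ : List α) (r : R), (A σ r) <+: (A (σ ++ τ) r)) (σ a : List α) (r : R) :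
    ∃ b : List β, b.length = a.length ∧ A (σ ++ a) r = A σ r ++ b := by
  obtain ⟨b, hb⟩ := hprefix σ a r
  refine ⟨b, ?_, hb.symm⟩
  have := congrArg List.length hb
  simp only [List.length_append, hlen] at this
  omega

end OnlineAlgorithm

theorem stmt_7_general {α β : Type*} (s : ℕ) (R : Type*)
    (p : PMF R)
    (A : List α → R → List β)
    (hlen : ∀ (σ : List α) (r : R), (A σ r).length = σ.length)
    (hprefix : ∀ (σ τ : List α) (r : R), (A σ r) <+: (A (σ ++ τ) r))
    (k : ℕ) :
    ∀ r : R, p r > 2 ^ (-(s + 2 : ℤ)) →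
      ∃ σstar : List α, σstar.length ≤ (2 * s + 3) * k ∧
        ∀ a : List α, a.length = k →
          ∃ b : List β, b.length = k ∧
            3 * p.toOuterMeasure {r' : R | A (σstar ++ a) r' = (A σstar r) ++ b}
              ≥ 2 * p.toOuterMeasure {r' : R | A σstar r' = A σstar r} := by
  intro r hr
  by_contra! hfail
  set mass : List α → ℝ≥0∞ := fun σ => p.toOuterMeasure {r' | A σ r' = A σ r}
  have hshrink : ∀ σ : List α, σ.length ≤ (2 * s + 3) * k →
      ∃ a : List α, a.length = k ∧ 3 * mass (σ ++ a) ≤ 2 * mass σ := by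
    intro σ hσ
    obtain ⟨a, ha, hno⟩ := hfail σ hσ
    obtain ⟨b, hb, hab⟩ := exists_output_append hlen hprefix σ a r
    exact ⟨a, ha, by simpa only [mass, hab] using (hno b (hb.trans ha)).le⟩
  have hnil : mass [] = 1 :=
    (p.toOuterMeasure_apply_eq_one_iff _).2 fun r' _ => output_nil_eq hlen r r'
  obtain ⟨σ, -, hσ⟩ := exists_length_eq_pow_mul_le hshrink (2 * (s + 2)) (by omega)
  have hmass : 2 ^ (-((s + 2 : ℕ) : ℤ)) < mass σ := by
    push_cast
    exact hr.trans_le (p.apply_le_toOuterMeasure_of_mem rfl)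
  rw [hnil, mul_one] at hσ
  exact (ENNReal.two_pow_lt_three_pow_mul (s + 2) hmass).not_ge hσ

/-- Converting a random-start algorithm into a pseudo-deterministic one:
if `A` is an online algorithm with seed space `R` of at most `2^s` seeds, then
for every seed `r` of probability greater than `2^{-(s+2)}` there is a partial
stream `σ*` of length at most `(2s+3)·k` such that for every next block `a` of
`k` items some output block `b` of length `k` is produced with conditional
probability at least `2/3` given the output history. -/
theorem stmt_7 {α β : Type*} (s : ℕ) (R : Type*) [Fintype R]
    (hR : Fintype.card R ≤ 2 ^ s) (p : PMF R)
    (A : List α → R → List β)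
    (hlen : ∀ (σ : List α) (r : R), (A σ r).length = σ.length)
    (hprefix : ∀ (σ τ : List α) (r : R), (A σ r) <+: (A (σ ++ τ) r))
    (k : ℕ) (hk : 1 ≤ k) :
    ∀ r : R, p r > 2 ^ (-(s + 2 : ℤ)) →
      ∃ σstar : List α, σstar.length ≤ (2 * s + 3) * k ∧
        ∀ a : List α, a.length = k →
          ∃ b : List β, b.length = k ∧
            3 * p.toOuterMeasure {r' : R | A (σstar ++ a) r' = (A σstar r) ++ b}
              ≥ 2 * p.toOuterMeasure {r' : R | A σstar r' = A σstar r} :=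
  stmt_7_general s R p A hlen hprefix k
end

section
/- Let n and ℓ be positive integers. Let S : Fin ℓ → (Fin ℓ → Fin n) → Finset (Fin n) be a family of 'adversary' sets such that (i) S i x depends only on the coordinates of x of index smaller than i, i.e. for all i and all x, y : Fin ℓ → Fin n, if x j = y j for every j < i then S i x = S i y, and (ii) (S i x).card ≤ i + 1 for every i and x. Then, for x drawn from the uniform probability mass function on the function type Fin ℓ → Fin n (i.e., ℓ independent uniform samples from Fin n), the probability of the event {x | ∃ i : Fin ℓ, x i ∈ S i x} is at most (ℓ² + ℓ)/(2n). -/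
open scoped ENNReal

lemma aux_gauss (m : ℕ) : 2 * (∑ j ∈ Finset.range m, (j + 1)) = m ^ 2 + m := by
  induction m with
  | zero => simp
  | succ k ih => rw [Finset.sum_range_succ, Nat.mul_add, ih]; ring

lemma aux_per_i (n ℓ : ℕ) [NeZero n]
    (S : Fin ℓ → (Fin ℓ → Fin n) → Finset (Fin n))
    (hadaptive : ∀ (i : Fin ℓ) (x y : Fin ℓ → Fin n),
      (∀ j : Fin ℓ, j < i → x j = y j) → S i x = S i y)
    (hcard : ∀ (i : Fin ℓ) (x : Fin ℓ → Fin n), (S i x).card ≤ (i : ℕ) + 1)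
    (i : Fin ℓ) :
    (PMF.uniformOfFintype (Fin ℓ → Fin n)).toOuterMeasure {x | x i ∈ S i x}
      ≤ ((i : ℝ≥0∞) + 1) / n := by
  classical
  set e := Equiv.funSplitAt i (Fin n)
  have hd : ∀ (v : Fin n) (z : {j : Fin ℓ // j ≠ i} → Fin n),
      S i (e.symm (v, z)) = S i (e.symm (0, z)) := by
    intro v z
    apply hadaptive
    intro j hj
    simp [e, Equiv.funSplitAt, Equiv.piSplitAt, hj.ne]
  have key : (PMF.uniformOfFintype (Fin ℓ → Fin n)).toOuterMeasure {x | x i ∈ S i x}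
      = ∑ z : {j : Fin ℓ // j ≠ i} → Fin n, ∑ v : Fin n,
          (if v ∈ S i (e.symm (0, z)) then (Fintype.card (Fin ℓ → Fin n) : ℝ≥0∞)⁻¹ else 0) := by
    rw [PMF.toOuterMeasure_apply]
    rw [← Equiv.tsum_eq e.symm]
    rw [tsum_fintype, Fintype.sum_prod_type, Finset.sum_comm]
    refine Finset.sum_congr rfl fun z _ => Finset.sum_congr rfl fun v _ => ?_
    have h1 : e.symm (v, z) i = v := by
      simp [e, Equiv.funSplitAt, Equiv.piSplitAt]
    rw [Set.indicator_apply]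
    simp only [Set.mem_setOf_eq, h1, hd v z, PMF.uniformOfFintype_apply]
  rw [key]
  set N := Fintype.card ({j : Fin ℓ // j ≠ i} → Fin n) with hNdef
  have hN : (N : ℝ≥0∞) ≠ 0 := Nat.cast_ne_zero.2 Fintype.card_ne_zero
  have hcardtot : (Fintype.card (Fin ℓ → Fin n) : ℝ≥0∞) = (n : ℝ≥0∞) * N := by
    rw [Fintype.card_congr e, Fintype.card_prod, Fintype.card_fin]
    push_cast; ring
  calc ∑ z : {j : Fin ℓ // j ≠ i} → Fin n, ∑ v : Fin n,
          (if v ∈ S i (e.symm (0, z)) then (Fintype.card (Fin ℓ → Fin n) : ℝ≥0∞)⁻¹ else 0)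
      ≤ ∑ _z : {j : Fin ℓ // j ≠ i} → Fin n,
          ((i : ℝ≥0∞) + 1) * (Fintype.card (Fin ℓ → Fin n) : ℝ≥0∞)⁻¹ := by
        refine Finset.sum_le_sum fun z _ => ?_
        rw [Finset.sum_ite_mem, Finset.univ_inter, Finset.sum_const, nsmul_eq_mul]
        refine mul_le_mul_left ?_ _
        have := hcard i (e.symm (0, z))
        exact_mod_cast (Nat.cast_le (α := ℝ≥0∞)).2 this
    _ = ((i : ℝ≥0∞) + 1) / n := by
        rw [Finset.sum_const, nsmul_eq_mul, Finset.card_univ, hcardtot,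
          ENNReal.mul_inv (Or.inl (by simp [NeZero.ne n])) (Or.inl (by simp)),
          div_eq_mul_inv]
        have hring : (N : ℝ≥0∞) * (((i : ℝ≥0∞) + 1) * ((n : ℝ≥0∞)⁻¹ * (N : ℝ≥0∞)⁻¹))
            = ((N : ℝ≥0∞) * (N : ℝ≥0∞)⁻¹) * (((i : ℝ≥0∞) + 1) * (n : ℝ≥0∞)⁻¹) := by ring
        rw [hring, ENNReal.mul_inv_cancel hN (by simp), one_mul]

/-- Randomness-on-the-fly correctness: if at each turn `i` the adversary's set
`S i x` has at most `i+1` elements and depends only on the guesses before turn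
`i`, then `ℓ` independent uniform guesses from `Fin n` all avoid the
adversary's sets except with probability at most `(ℓ² + ℓ)/(2n)`. -/
theorem stmt_9 (n ℓ : ℕ) (hn : 0 < n) (hℓ : 0 < ℓ)
    (S : Fin ℓ → (Fin ℓ → Fin n) → Finset (Fin n))
    (hadaptive : ∀ (i : Fin ℓ) (x y : Fin ℓ → Fin n),
      (∀ j : Fin ℓ, j < i → x j = y j) → S i x = S i y)
    (hcard : ∀ (i : Fin ℓ) (x : Fin ℓ → Fin n), (S i x).card ≤ (i : ℕ) + 1) :
    haveI : NeZero n := ⟨hn.ne'⟩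
    (PMF.uniformOfFintype (Fin ℓ → Fin n)).toOuterMeasure
        {x | ∃ i : Fin ℓ, x i ∈ S i x}
      ≤ ((ℓ : ℝ≥0∞) ^ 2 + (ℓ : ℝ≥0∞)) / (2 * (n : ℝ≥0∞)) := by
  haveI : NeZero n := ⟨hn.ne'⟩
  have hset : {x : Fin ℓ → Fin n | ∃ i : Fin ℓ, x i ∈ S i x}
      = ⋃ i : Fin ℓ, {x | x i ∈ S i x} := by
    ext x; simp
  rw [hset]
  have hsum : 2 * (∑ i : Fin ℓ, ((i : ℕ) + 1)) = ℓ ^ 2 + ℓ := by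
    rw [Fin.sum_univ_eq_sum_range (fun j => j + 1) ℓ]; exact aux_gauss ℓ
  calc (PMF.uniformOfFintype (Fin ℓ → Fin n)).toOuterMeasure (⋃ i : Fin ℓ, {x | x i ∈ S i x})
      ≤ ∑' i : Fin ℓ, (PMF.uniformOfFintype (Fin ℓ → Fin n)).toOuterMeasure {x | x i ∈ S i x} :=
        MeasureTheory.measure_iUnion_le _
    _ ≤ ∑' i : Fin ℓ, ((i : ℝ≥0∞) + 1) / n :=
        ENNReal.tsum_le_tsum fun i => aux_per_i n ℓ S hadaptive hcard i
    _ = (↑(∑ i : Fin ℓ, ((i : ℕ) + 1)) : ℝ≥0∞) / n := by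
        rw [tsum_fintype]
        simp only [div_eq_mul_inv, ← Finset.sum_mul]
        congr 1
        push_cast
        rfl
    _ ≤ ((ℓ : ℝ≥0∞) ^ 2 + (ℓ : ℝ≥0∞)) / (2 * (n : ℝ≥0∞)) := by
        have h2 : ((ℓ : ℝ≥0∞) ^ 2 + (ℓ : ℝ≥0∞)) = ((ℓ ^ 2 + ℓ : ℕ) : ℝ≥0∞) := by
          push_cast; ring
        rw [h2, ← hsum]
        push_cast
        rw [ENNReal.mul_div_mul_left _ _ (by norm_num) (by norm_num)]
end
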